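/- arXiv:1705.02697 — 2 statements merged into one kernel-verified Lean document; each statement's English description precedes it below -/
import Mathlib

section
/- If every submodule of a module M is completely semiprime, then E_M(N) is a submodule of M for every submodule N of M. -/
/-- A submodule `P` is completely prime if it is proper and `a • m ∈ P` implies
`m ∈ P` or `a • M ⊆ P`. -/
def IsCompletelyPrimeSubmodule {R : Type*} [Ring R] {M : Type*} [AddCommGroup M] [Module R M]
    (P : Submodule R M) : Prop :=
  P ≠ ⊤ ∧ ∀ (a : R) (m : M), a • m ∈ P → m ∈ P ∨ ∀ x : M, a • x ∈ P

/-- A submodule `P` is prime if it is proper and for every two-sided ideal `A` of `R`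
and submodule `N`, `A N ⊆ P` implies `N ⊆ P` or `A M ⊆ P`. -/
def IsPrimeSubmodule {R : Type*} [Ring R] {M : Type*} [AddCommGroup M] [Module R M]
    (P : Submodule R M) : Prop :=
  P ≠ ⊤ ∧ ∀ (A : TwoSidedIdeal R) (N : Submodule R M),
    (∀ a ∈ A, ∀ n ∈ N, a • n ∈ P) → N ≤ P ∨ ∀ a ∈ A, ∀ x : M, a • x ∈ P

/-- The prime radical `β(N)`: the intersection of all prime submodules containing `N`
(equal to `⊤ = M` if there are none). -/
def primeRadical {R : Type*} [Ring R] {M : Type*} [AddCommGroup M] [Module R M]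
    (N : Submodule R M) : Submodule R M :=
  sInf {P | IsPrimeSubmodule P ∧ N ≤ P}

/-- The completely prime radical `β_co(N)`: the intersection of all completely prime
submodules containing `N` (equal to `⊤ = M` if there are none). -/
def cpRadical {R : Type*} [Ring R] {M : Type*} [AddCommGroup M] [Module R M]
    (N : Submodule R M) : Submodule R M :=
  sInf {P | IsCompletelyPrimeSubmodule P ∧ N ≤ P}

/-- The envelope `E_M(N) = {r • m : r^k • m ∈ N for some positive integer k}`. -/
def envelope {R : Type*} [Ring R] {M : Type*} [AddCommGroup M] [Module R M]
    (N : Submodule R M) : Set M :=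
  {x | ∃ (r : R) (m : M) (k : ℕ), 0 < k ∧ r ^ k • m ∈ N ∧ x = r • m}

/-- A submodule `N` is completely semiprime if `a ^ 2 • m ∈ N` implies `a • m ∈ N`. -/
def IsCompletelySemiprimeSubmodule {R : Type*} [Ring R] {M : Type*} [AddCommGroup M]
    [Module R M] (N : Submodule R M) : Prop :=
  ∀ (a : R) (m : M), a ^ 2 • m ∈ N → a • m ∈ N

theorem subset_envelope {R : Type*} [Ring R] {M : Type*} [AddCommGroup M] [Module R M]
    (N : Submodule R M) : (N : Set M) ⊆ envelope N :=
  fun x hx => ⟨1, x, 1, one_pos, by rwa [one_pow, one_smul], (one_smul R x).symm⟩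

namespace IsCompletelySemiprimeSubmodule

variable {R : Type*} [Ring R] {M : Type*} [AddCommGroup M] [Module R M] {N : Submodule R M}

theorem pow_succ_smul_mem_of_pow_add_two_smul_mem (hN : IsCompletelySemiprimeSubmodule N)
    {r : R} {m : M} {k : ℕ} (h : r ^ (k + 2) • m ∈ N) : r ^ (k + 1) • m ∈ N := by
  refine hN _ _ ?_
  -- `(r ^ (k + 1)) ^ 2 • m = r ^ k • (r ^ (k + 2) • m)`
  rw [← pow_mul, show (k + 1) * 2 = k + (k + 2) by ring, pow_add, mul_smul]
  exact N.smul_mem _ h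

theorem smul_mem_of_pow_smul_mem (hN : IsCompletelySemiprimeSubmodule N) {r : R} {m : M}
    {k : ℕ} (hk : k ≠ 0) (h : r ^ k • m ∈ N) : r • m ∈ N := by
  obtain ⟨k, rfl⟩ := Nat.exists_eq_succ_of_ne_zero hk
  induction k with
  | zero => simpa using h
  | succ k ih => exact ih k.succ_ne_zero (hN.pow_succ_smul_mem_of_pow_add_two_smul_mem h)

theorem envelope_eq (hN : IsCompletelySemiprimeSubmodule N) : envelope N = N := by
  refine Set.Subset.antisymm ?_ (subset_envelope N)
  rintro _ ⟨r, m, k, hk, hmem, rfl⟩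
  exact hN.smul_mem_of_pow_smul_mem hk.ne' hmem

end IsCompletelySemiprimeSubmodule

/-- if every submodule of `M` is completely semiprime, then `E_M(N)` is a
submodule of `M` for every submodule `N`. -/
theorem envelope_isSubmodule_of_all_completelySemiprime {R : Type*} [Ring R] {M : Type*}
    [AddCommGroup M] [Module R M]
    (h : ∀ N : Submodule R M, IsCompletelySemiprimeSubmodule N) :
    ∀ N : Submodule R M, ∃ S : Submodule R M, (S : Set M) = envelope N :=
  fun N => ⟨N, (h N).envelope_eq.symm⟩
end

section
/- If a submodule N of an R-module M is 2-primal and β_co(N) ⊆ ⟨E_M(N)⟩, then the zero submodule of M/N satisfies the radical formula: β(M/N) = ⟨E_{M/N}(0)⟩. -/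
section

variable {R : Type*} [Ring R] {M M' : Type*} [AddCommGroup M] [Module R M]
  [AddCommGroup M'] [Module R M']

theorem IsCompletelyPrimeSubmodule.smul_mem_of_pow_smul_mem {P : Submodule R M}
    (hP : IsCompletelyPrimeSubmodule P) {r : R} {m : M} {k : ℕ} (hk : 0 < k)
    (h : r ^ k • m ∈ P) : r • m ∈ P := by
  induction k, hk using Nat.le_induction with
  | base => simpa using h
  | succ k hk ih =>
    rw [pow_succ', ← smul_smul] at h
    exact (hP.2 r _ h).elim ih (· m)

theorem envelope_subset {N P : Submodule R M} (hP : IsCompletelyPrimeSubmodule P)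
    (hNP : N ≤ P) : envelope N ⊆ P := by
  rintro _ ⟨r, m, k, hk, hmem, rfl⟩
  exact hP.smul_mem_of_pow_smul_mem hk (hNP hmem)

theorem span_envelope_le_cpRadical (N : Submodule R M) :
    Submodule.span R (envelope N) ≤ cpRadical N :=
  le_sInf fun _ ⟨hP, hNP⟩ => Submodule.span_le.2 (envelope_subset hP hNP)

theorem image_envelope_subset (f : M →ₗ[R] M') {N : Submodule R M} {N' : Submodule R M'}
    (h : N ≤ N'.comap f) : f '' envelope N ⊆ envelope N' := by
  rintro _ ⟨_, ⟨r, m, k, hk, hmem, rfl⟩, rfl⟩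
  exact ⟨r, f m, k, hk, by simpa using h hmem, map_smul f r m⟩

theorem map_span_envelope_le (f : M →ₗ[R] M') {N : Submodule R M} {N' : Submodule R M'}
    (h : N ≤ N'.comap f) :
    (Submodule.span R (envelope N)).map f ≤ Submodule.span R (envelope N') := by
  rw [Submodule.map_span]
  exact Submodule.span_mono (image_envelope_subset f h)

theorem IsCompletelyPrimeSubmodule.map {f : M →ₗ[R] M'} (hf : Function.Surjective f)
    {Q : Submodule R M} (hQ : IsCompletelyPrimeSubmodule Q)
    (hker : LinearMap.ker f ≤ Q) : IsCompletelyPrimeSubmodule (Q.map f) := by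
  have hmem (m : M) : f m ∈ Q.map f ↔ m ∈ Q := by
    rw [← Submodule.mem_comap, Submodule.comap_map_eq_self hker]
  refine ⟨fun htop => hQ.1 ?_, fun a y hy => ?_⟩
  · rw [← Submodule.comap_map_eq_self hker, htop, Submodule.comap_top]
  · obtain ⟨m, rfl⟩ := hf y
    rw [← map_smul, hmem] at hy
    refine (hQ.2 a m hy).imp (hmem m).2 fun hall x => ?_
    obtain ⟨x, rfl⟩ := hf x
    rw [← map_smul, hmem]
    exact hall x

theorem comap_cpRadical_bot_le {f : M →ₗ[R] M'} (hf : Function.Surjective f) :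
    (cpRadical (⊥ : Submodule R M')).comap f ≤ cpRadical (LinearMap.ker f) := by
  refine le_sInf fun Q ⟨hQ, hker⟩ x hx => ?_
  have hfx : f x ∈ Q.map f := Submodule.mem_sInf.1 hx _ ⟨hQ.map hf hker, bot_le⟩
  rwa [← Submodule.mem_comap, Submodule.comap_map_eq_self hker] at hfx

end

/-- if `N` is 2-primal and `β_co(N) ⊆ ⟨E_M(N)⟩`, then the zero submodule of
`M/N` satisfies the radical formula. -/
theorem radical_formula_quotient_of_twoPrimal {R : Type*} [Ring R] {M : Type*}
    [AddCommGroup M] [Module R M] (N : Submodule R M)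
    (h2p : cpRadical (⊥ : Submodule R (M ⧸ N)) = primeRadical (⊥ : Submodule R (M ⧸ N)))
    (hco : cpRadical N ≤ Submodule.span R (envelope N)) :
    primeRadical (⊥ : Submodule R (M ⧸ N)) =
      Submodule.span R (envelope (⊥ : Submodule R (M ⧸ N))) := by
  rw [← h2p]
  refine le_antisymm ?_ (span_envelope_le_cpRadical _)
  have hcp : (cpRadical (⊥ : Submodule R (M ⧸ N))).comap N.mkQ ≤ cpRadical N := by
    simpa only [Submodule.ker_mkQ] using comap_cpRadical_bot_le N.mkQ_surjective
  calc cpRadical ⊥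
      = ((cpRadical ⊥).comap N.mkQ).map N.mkQ :=
        (Submodule.map_comap_eq_of_surjective N.mkQ_surjective _).symm
    _ ≤ (Submodule.span R (envelope N)).map N.mkQ := Submodule.map_mono (hcp.trans hco)
    _ ≤ Submodule.span R (envelope ⊥) :=
        map_span_envelope_le N.mkQ (by rw [Submodule.comap_bot, Submodule.ker_mkQ])
end
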